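/- Let V ⊂ ℝ³ be a finite set in which no two distinct points agree in any coordinate, and define u ∼ v iff u ≠ v and every w ∈ V ∖ {u,v} satisfies w₁ > max(u₁,v₁) or w₂ > max(u₂,v₂) or w₃ ∉ [min(u₃,v₃), max(u₃,v₃)]. Fix v ∈ V and let w, w' ∈ V be two points with w ∼ v, w' ∼ v, w₁ < v₁, w'₁ < v₁, w₂ > v₂, w'₂ > v₂, w₃ > v₃ and w'₃ > v₃. Then w₂ < w'₂ if and only if w₃ > w'₃. -/
import Mathlib


open scoped Classical

/-- The edge relation (⋆) for graphs with a realizer of the form `{π₁, π₂, π₃, π̄₃}`: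
`u ∼ v` iff `u ≠ v` and every other point `w` of `V` satisfies
`w₁ > max(u₁,v₁)` or `w₂ > max(u₂,v₂)` or `w₃ ∉ [min(u₃,v₃), max(u₃,v₃)]`. -/
def Rel3 (V : Finset (Fin 3 → ℝ)) (u v : Fin 3 → ℝ) : Prop :=
  u ≠ v ∧ ∀ w ∈ V, w ≠ u → w ≠ v →
    max (u 0) (v 0) < w 0 ∨ max (u 1) (v 1) < w 1 ∨
    w 2 ∉ Set.Icc (min (u 2) (v 2)) (max (u 2) (v 2))

/-- Fact 2(a): for two neighbors `w, w'` of `v` lying north-west of `v` with larger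
third coordinate, the second and third coordinates are coupled in opposite ways. -/
theorem nw_plus_neighbors_coupled (V : Finset (Fin 3 → ℝ))
    (hgen : ∀ p ∈ V, ∀ q ∈ V, p ≠ q → ∀ i, p i ≠ q i)
    (v : Fin 3 → ℝ) (hv : v ∈ V)
    (w w' : Fin 3 → ℝ) (hw : w ∈ V) (hw' : w' ∈ V)
    (hrel : Rel3 V w v) (hrel' : Rel3 V w' v)
    (h1 : w 0 < v 0) (h1' : w' 0 < v 0)
    (h2 : v 1 < w 1) (h2' : v 1 < w' 1)
    (h3 : v 2 < w 2) (h3' : v 2 < w' 2) :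
    w 1 < w' 1 ↔ w' 2 < w 2 := by
  by_cases hne : w = w'
  · subst hne; simp
  have A := hrel.2 w' hw' (Ne.symm hne) hrel'.1
  have B := hrel'.2 w hw hne hrel.1
  simp only [max_eq_right h1.le, max_eq_right h1'.le, 
    Set.mem_Icc, min_eq_right h3.le, min_eq_right h3'.le, max_eq_left h3.le, max_eq_left h3'.le,
    max_eq_left h2.le, max_eq_left h2'.le, not_and, not_le] at A B
  have hA : w 1 < w' 1 ∨ w 2 < w' 2 := by
    rcases A with h | h | h
    · exact absurd h (not_lt.2 h1'.le)
    · exact Or.inl h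
    · exact Or.inr (h h3'.le)
  have hB : w' 1 < w 1 ∨ w' 2 < w 2 := by
    rcases B with h | h | h
    · exact absurd h (not_lt.2 h1.le)
    · exact Or.inl h
    · exact Or.inr (h h3.le)
  constructor
  · intro h
    rcases hB with h' | h'
    · exact absurd h (not_lt.2 h'.le)
    · exact h'
  · intro h
    rcases hA with h' | h'
    · exact h'
    · exact absurd h (not_lt.2 h'.le)
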